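/- Let Σ' = Σ'_i × Σ'_{-i} ⊆ Σ with Σ'_{-i} nonempty and let σ ∈ Σ'_i. Then σ is not weakly dominated on Σ' (i.e., no mixed strategy of player i weakly dominates σ with respect to Σ'_{-i}) if and only if there exists an LPS μ⃗_σ = (μ_{σ,0}, …) on Σ'_{-i} whose first measure μ_{σ,0} has support all of Σ'_{-i}, such that for each information set I of player i, either Σ'_{σ,I,-i} = ∅ or σ is an almost-best response conditional on reaching I to μ⃗_σ | Σ'_{σ,I,-i}. -/

import Mathlib

open scoped BigOperators

noncomputable section

/-- A probability distribution on a finite type, represented as a weight function. -/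
def IsDist {α : Type*} [Fintype α] (p : α → ℝ) : Prop :=
  (∀ a, 0 ≤ p a) ∧ ∑ a, p a = 1

/-- The probability of a set under a weight function. -/
def probOf {α : Type*} [Fintype α] (p : α → ℝ) (E : Set α) : ℝ :=
  ∑ a, E.indicator p a

/-- A lexicographic probability sequence on a finite type. -/
structure LPS (Ω : Type*) [Fintype Ω] where
  m : ℕ
  μ : Fin (m + 1) → Ω → ℝ
  dist : ∀ ℓ, IsDist (μ ℓ)

namespace LPS

variable {Ω : Type*} [Fintype Ω]

open Classical in
/-- `(μ⃗(V | E))₀`: the conditional probability of `V` given `E` under the first measure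
of the LPS that gives `E` positive probability (0 if there is none). -/
def condFirst (L : LPS Ω) (V E : Set Ω) : ℝ :=
  if h : ∃ ℓ : ℕ, ∃ hℓ : ℓ < L.m + 1, 0 < probOf (L.μ ⟨ℓ, hℓ⟩) E then
    probOf (L.μ ⟨Nat.find h, (Nat.find_spec h).choose⟩) (V ∩ E) /
      probOf (L.μ ⟨Nat.find h, (Nat.find_spec h).choose⟩) E
  else 0

/-- Expectation of `f` under the first measure of `μ⃗|E`. -/
def condExp (L : LPS Ω) (E : Set Ω) (f : Ω → ℝ) : ℝ :=
  ∑ a, L.condFirst {a} E * f a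

end LPS

/-- The experience of player `i` along a history: the sequence of information-set labels of
`i` visited together with the actions `i` took there. `experGo owner label i pre rest`
processes the history `pre ++ rest`, where `pre` has already been traversed. -/
def experGo {Act Lab ι : Type*} [DecidableEq ι] (owner : List Act → ι)
    (label : List Act → Lab) (i : ι) : List Act → List Act → List (Lab × Act)
  | _, [] => []
  | pre, a :: rest =>
      (if owner pre = i then [(label pre, a)] else []) ++
        experGo owner label i (pre ++ [a]) rest

/-- A finite extensive-form game with perfect recall for `n` players and no chance moves,
presented via its set of histories (sequences of actions from the root). `owner h` is the
player who moves at a nonterminal history `h`, `label h` is the information set containing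
`h`, and `payoff i h` is `i`'s utility at a terminal history `h`. -/
structure ExtGame (n : ℕ) where
  Act : Type
  Lab : Type
  actFin : Fintype Act
  actDeq : DecidableEq Act
  actNe : Nonempty Act
  labFin : Fintype Lab
  labDeq : DecidableEq Lab
  maxLen : ℕ
  H : Set (List Act)
  root_mem : [] ∈ H
  prefix_closed : ∀ (h : List Act) (a : Act), h ++ [a] ∈ H → h ∈ H
  len_bound : ∀ h ∈ H, h.length ≤ maxLen
  owner : List Act → Fin n
  label : List Act → Lab
  payoff : Fin n → List Act → ℝ
  payoff_mem : ∀ (i : Fin n) (h : List Act), h ∈ H → (∀ a, h ++ [a] ∉ H) →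
    payoff i h ∈ Set.Icc (0 : ℝ) 1
  same_owner : ∀ h h', h ∈ H → h' ∈ H → (∃ a, h ++ [a] ∈ H) → (∃ a, h' ++ [a] ∈ H) →
    label h = label h' → owner h = owner h'
  same_actions : ∀ h h', h ∈ H → h' ∈ H → (∃ a, h ++ [a] ∈ H) → (∃ a, h' ++ [a] ∈ H) →
    label h = label h' → ∀ a, (h ++ [a] ∈ H ↔ h' ++ [a] ∈ H)
  no_two_on_path : ∀ h h', h ∈ H → h' ∈ H → (∃ a, h ++ [a] ∈ H) → (∃ a, h' ++ [a] ∈ H) →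
    label h = label h' → h <+: h' → h = h'
  perfect_recall : ∀ h h', h ∈ H → h' ∈ H → (∃ a, h ++ [a] ∈ H) → (∃ a, h' ++ [a] ∈ H) →
    label h = label h' →
    experGo owner label (owner h) [] h = experGo owner label (owner h) [] h'

attribute [instance] ExtGame.actFin ExtGame.actDeq ExtGame.actNe ExtGame.labFin
  ExtGame.labDeq

namespace ExtGame

variable {n : ℕ}

/-- `h` is a decision node. -/
def Dec (G : ExtGame n) (h : List G.Act) : Prop := h ∈ G.H ∧ ∃ a, h ++ [a] ∈ G.H

/-- `h` is a decision node of player `i`. -/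
def DecOf (G : ExtGame n) (i : Fin n) (h : List G.Act) : Prop := G.Dec h ∧ G.owner h = i

/-- `c` is (the label of) an information set of player `i`. -/
def IsInfo (G : ExtGame n) (i : Fin n) (c : G.Lab) : Prop :=
  ∃ h, G.DecOf i h ∧ G.label h = c

/-- A pure strategy of player `i`: an assignment of an available action to each
information set of `i`. -/
def PStrat (G : ExtGame n) (i : Fin n) : Type :=
  {s : G.Lab → G.Act // ∀ h, G.DecOf i h → h ++ [s (G.label h)] ∈ G.H}

instance (G : ExtGame n) (i : Fin n) : Finite (G.PStrat i) := Subtype.finite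

noncomputable instance (G : ExtGame n) (i : Fin n) : Fintype (G.PStrat i) :=
  Fintype.ofFinite _

noncomputable instance (G : ExtGame n) (i : Fin n) : DecidableEq (G.PStrat i) :=
  Classical.decEq _

/-- Opponents' pure-strategy profiles. -/
abbrev OppProf (G : ExtGame n) (i : Fin n) : Type :=
  (j : {j : Fin n // j ≠ i}) → G.PStrat j.val

/-- Combining a strategy for `i` with an opponents' profile. -/
def combine (G : ExtGame n) (i : Fin n) (s : G.PStrat i) (τ : G.OppProf i) :
    (j : Fin n) → G.PStrat j :=
  fun j => if h : j = i then cast (congrArg G.PStrat h.symm) s else τ ⟨j, h⟩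

open Classical in
/-- The play of the game from history `h` under profile `sp`, with fuel `f`. -/
def playFrom (G : ExtGame n) (sp : (j : Fin n) → G.PStrat j) :
    ℕ → List G.Act → List G.Act
  | 0, h => h
  | f + 1, h =>
      if G.Dec h then
        G.playFrom sp f (h ++ [(sp (G.owner h)).val (G.label h)])
      else h

/-- The terminal history reached by the profile `sp`. -/
def outcome (G : ExtGame n) (sp : (j : Fin n) → G.PStrat j) : List G.Act :=
  G.playFrom sp (G.maxLen + 1) []

/-- Player `i`'s utility under the profile `sp`. -/
def U (G : ExtGame n) (i : Fin n) (sp : (j : Fin n) → G.PStrat j) : ℝ :=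
  G.payoff i (G.outcome sp)

/-- The profile `sp` reaches the information set `c` of player `i`. -/
def Reaches (G : ExtGame n) (sp : (j : Fin n) → G.PStrat j) (i : Fin n) (c : G.Lab) :
    Prop :=
  ∃ p, p <+: G.outcome sp ∧ G.DecOf i p ∧ G.label p = c

/-- `Σ'_{σ,I,-i}`: the opponents' profiles in `T` for which `(σ, τ₋ᵢ)` reaches `c`. -/
def ReachSet (G : ExtGame n) (i : Fin n) (σ : G.PStrat i) (c : G.Lab)
    (T : Set (G.OppProf i)) : Set (G.OppProf i) :=
  {τ ∈ T | G.Reaches (G.combine i σ τ) i c}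

/-- `Σ'_{σ,σ',I,-i}` for a mixed strategy `m`. -/
def ReachSetMix (G : ExtGame n) (i : Fin n) (σ : G.PStrat i) (m : G.PStrat i → ℝ)
    (c : G.Lab) (T : Set (G.OppProf i)) : Set (G.OppProf i) :=
  {τ ∈ T | G.Reaches (G.combine i σ τ) i c ∧
    ∀ s, 0 < m s → G.Reaches (G.combine i s τ) i c}

/-- Utility of the mixed strategy `m` of player `i` against the opponents' profile `τ`. -/
def EUmixE (G : ExtGame n) (i : Fin n) (m : G.PStrat i → ℝ) (τ : G.OppProf i) : ℝ :=
  ∑ s : G.PStrat i, m s * G.U i (G.combine i s τ)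

/-- `σ` is conditionally dominated on `Σ'_i × T`. -/
def CondDom (G : ExtGame n) (i : Fin n) (σ : G.PStrat i) (T : Set (G.OppProf i)) :
    Prop :=
  ∃ c, G.IsInfo i c ∧ ∃ m : G.PStrat i → ℝ, IsDist m ∧
    (G.ReachSetMix i σ m c T).Nonempty ∧
    ∀ τ ∈ G.ReachSetMix i σ m c T, G.U i (G.combine i σ τ) < G.EUmixE i m τ

/-- The information set `c'` of player `i` is at or below `c`. -/
def AtOrBelow (G : ExtGame n) (i : Fin n) (c' c : G.Lab) : Prop :=
  ∃ h h', G.DecOf i h ∧ G.DecOf i h' ∧ G.label h' = c ∧ G.label h = c' ∧ h' <+: h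

/-- The information set `c'` of player `i` precedes `c`. -/
def Precedes (G : ExtGame n) (i : Fin n) (c' c : G.Lab) : Prop :=
  ∃ h h', G.DecOf i h ∧ G.DecOf i h' ∧ G.label h = c' ∧ G.label h' = c ∧
    h <+: h' ∧ h ≠ h'

/-- `σ` is conditionally dominated′ on `Σ'_i × T`. -/
def CondDom' (G : ExtGame n) (i : Fin n) (σ : G.PStrat i) (T : Set (G.OppProf i)) :
    Prop :=
  ∃ c, G.IsInfo i c ∧ (G.ReachSet i σ c T).Nonempty ∧
    ∃ m : G.PStrat i → ℝ, IsDist m ∧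
      (∀ s, 0 < m s → ∀ c', G.IsInfo i c' → ¬G.AtOrBelow i c' c →
        s.val c' = σ.val c') ∧
      ∀ τ ∈ G.ReachSet i σ c T, G.U i (G.combine i σ τ) < G.EUmixE i m τ

/-- `σ` is weakly dominated by the mixed strategy `m` with respect to `T`. -/
def WDomE (G : ExtGame n) (i : Fin n) (m : G.PStrat i → ℝ) (σ : G.PStrat i)
    (T : Set (G.OppProf i)) : Prop :=
  (∀ τ ∈ T, G.U i (G.combine i σ τ) ≤ G.EUmixE i m τ) ∧
    ∃ τ ∈ T, G.U i (G.combine i σ τ) < G.EUmixE i m τ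

/-- `σ` is an almost-best response conditional on reaching the information set `c` to the
first measure of `L | E`. -/
def AlmostBestAt (G : ExtGame n) (i : Fin n) (σ : G.PStrat i) (c : G.Lab)
    (L : LPS (G.OppProf i)) (E : Set (G.OppProf i)) : Prop :=
  ∀ σ' : G.PStrat i,
    (∀ c', G.IsInfo i c' → G.Precedes i c' c → σ'.val c' = σ.val c') →
    L.condExp E (fun τ => G.U i (G.combine i σ' τ)) ≤
      L.condExp E (fun τ => G.U i (G.combine i σ τ))

end ExtGame

end

/-!
By Pearce's lemma, `σ` is not weakly dominated on `T` iff it is a best response to a belief `p`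
whose support is exactly `T`; this is Stiemke's theorem of the alternative, obtained by separating
the simplex from the (closed, because finitely generated) cone of nonnegative combinations of the
payoff gains `u s - u σ`. Only the first level `p` of an LPS enters the conditions, and its
conditional on a reachable information set `c` is `p` restricted to the opponents' profiles
reaching `c`; so it remains to see that being a best response to `p` is the same as being optimal
at every such `c` against strategies that agree with `σ` before `c`. Both directions replace a
strategy by another one at and below `c` only; perfect recall guarantees that this changes the
play exactly on the profiles that reach `c`.
-/

open Finset

section NonnegCombinations

variable {E : Type*} [AddCommGroup E] [Module ℝ E] {ι : Type*} (v : ι → E)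

def nonnegCombinations (s : Finset ι) : Set E :=
  {x | ∃ m : ι → ℝ, (∀ i ∈ s, 0 ≤ m i) ∧ ∑ i ∈ s, m i • v i = x}

variable {v}

theorem convex_nonnegCombinations (s : Finset ι) : Convex ℝ (nonnegCombinations v s) := by
  rintro _ ⟨m, hm, rfl⟩ _ ⟨m', hm', rfl⟩ a b ha hb -
  refine ⟨a • m + b • m', fun i hi => ?_, ?_⟩
  · simp only [Pi.add_apply, Pi.smul_apply, smul_eq_mul]
    exact add_nonneg (mul_nonneg ha (hm i hi)) (mul_nonneg hb (hm' i hi))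
  · simp only [Pi.add_apply, Pi.smul_apply, smul_eq_mul, add_smul, mul_smul, sum_add_distrib,
      ← smul_sum]

theorem smul_mem_nonnegCombinations {s : Finset ι} {x : E} (hx : x ∈ nonnegCombinations v s)
    {r : ℝ} (hr : 0 ≤ r) : r • x ∈ nonnegCombinations v s := by
  obtain ⟨m, hm, rfl⟩ := hx
  exact ⟨r • m, fun i hi => mul_nonneg hr (hm i hi), by simp [smul_sum, mul_smul]⟩

/-- One step of the conic Carathéodory theorem. -/
theorem exists_mem_nonnegCombinations_erase [DecidableEq ι] {s : Finset ι} {g : ι → ℝ}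
    (hg : ∑ i ∈ s, g i • v i = 0) {j : ι} (hj : j ∈ s) (hgj : 0 < g j) {x : E}
    (hx : x ∈ nonnegCombinations v s) : ∃ k ∈ s, x ∈ nonnegCombinations v (s.erase k) := by
  obtain ⟨m, hm, rfl⟩ := hx
  obtain ⟨k, hk, hk_min⟩ := (s.filter (0 < g ·)).exists_min_image (fun i => m i / g i)
    ⟨j, mem_filter.2 ⟨hj, hgj⟩⟩
  obtain ⟨hks, hgk⟩ := mem_filter.1 hk
  set t := m k / g k
  have ht : 0 ≤ t := div_nonneg (hm k hks) hgk.le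
  refine ⟨k, hks, fun i => m i - t * g i, fun i hi => ?_, ?_⟩
  · have his := (mem_erase.1 hi).2
    rcases lt_or_ge 0 (g i) with hgi | hgi
    · have := hk_min i (mem_filter.2 ⟨his, hgi⟩)
      rw [le_div_iff₀ hgi] at this
      linarith
    · nlinarith [hm i his]
  · rw [sum_erase _ (by simp [t, div_mul_cancel₀ _ hgk.ne'])]
    simp only [sub_smul, mul_smul, sum_sub_distrib, ← smul_sum, hg, smul_zero, sub_zero]

theorem nonnegCombinations_mono {s t : Finset ι} (h : t ⊆ s) :
    nonnegCombinations v t ⊆ nonnegCombinations v s := by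
  classical
  rintro _ ⟨m, hm, rfl⟩
  refine ⟨fun i => if i ∈ t then m i else 0, fun i _ => ?_, ?_⟩
  · dsimp only
    split_ifs with hi
    exacts [hm i hi, le_rfl]
  · refine (sum_subset h fun i _ hi => by simp [hi]).symm.trans (sum_congr rfl fun i hi => ?_)
    simp [hi]

theorem nonnegCombinations_eq_image [DecidableEq ι] (s : Finset ι) :
    nonnegCombinations v s =
      Fintype.linearCombination ℝ (fun i : s => v i) '' {m | ∀ i, 0 ≤ m i} := by
  ext x
  simp only [nonnegCombinations, Set.mem_ofPred_eq, Set.mem_image, Fintype.linearCombination_apply]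
  constructor
  · rintro ⟨m, hm, rfl⟩
    exact ⟨fun i => m i, fun i => hm i i.2, sum_coe_sort s fun i => m i • v i⟩
  · rintro ⟨m, hm, rfl⟩
    refine ⟨fun i => if h : i ∈ s then m ⟨i, h⟩ else 0, fun i hi => by simp [hi, hm], ?_⟩
    rw [← sum_coe_sort s]
    simp

variable [TopologicalSpace E] [IsTopologicalAddGroup E] [ContinuousSMul ℝ E] [T2Space E]

theorem isClosed_nonnegCombinations [DecidableEq ι] (s : Finset ι) :
    IsClosed (nonnegCombinations v s) := by
  induction s using Finset.strongInduction with
  | H s ih =>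
  by_cases hindep : ∀ g : ι → ℝ, ∑ i ∈ s, g i • v i = 0 → ∀ i ∈ s, g i = 0
  · have hker : LinearMap.ker (Fintype.linearCombination ℝ (fun i : s => v i)) = ⊥ := by
      refine LinearMap.ker_eq_bot'.2 fun m hm => funext fun i => ?_
      have := hindep (fun i => if h : i ∈ s then m ⟨i, h⟩ else 0) (by
        rw [← sum_coe_sort s]; simpa [Fintype.linearCombination_apply] using hm) i i.2
      simpa using this
    rw [nonnegCombinations_eq_image]
    exact (LinearMap.isClosedEmbedding_of_injective hker).isClosedMap _
      (isClosed_le continuous_const continuous_id)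
  · push Not at hindep
    obtain ⟨g, hg, j, hj, hgj⟩ := hindep
    obtain ⟨g, hg, hgj⟩ : ∃ g : ι → ℝ, ∑ i ∈ s, g i • v i = 0 ∧ 0 < g j := by
      rcases hgj.lt_or_gt with hneg | hpos
      · exact ⟨-g, by simp [neg_smul, sum_neg_distrib, hg], by simpa using hneg⟩
      · exact ⟨g, hg, hpos⟩
    have : nonnegCombinations v s = ⋃ k ∈ s, nonnegCombinations v (s.erase k) := by
      refine subset_antisymm (fun x hx => ?_)
        (Set.iUnion₂_subset fun k _ => nonnegCombinations_mono (erase_subset k s))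
      obtain ⟨k, hk, hxk⟩ := exists_mem_nonnegCombinations_erase hg hj hgj hx
      exact Set.mem_biUnion hk hxk
    rw [this]
    exact isClosed_biUnion_finset fun k hk => ih _ (erase_ssubset hk)

end NonnegCombinations

/-- Stiemke's theorem of the alternative. -/
theorem exists_pos_forall_sum_mul_nonpos {S T : Type*} [Fintype S] [Fintype T] [Nonempty T]
    (A : S → T → ℝ)
    (hA : ∀ m : S → ℝ, (∀ s, 0 ≤ m s) → (∀ t, 0 ≤ ∑ s, m s * A s t) →
      ∀ t, ∑ s, m s * A s t = 0) :
    ∃ q : T → ℝ, (∀ t, 0 < q t) ∧ ∀ s, ∑ t, q t * A s t ≤ 0 := by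
  classical
  set K := nonnegCombinations A (univ : Finset S)
  have hdisj : Disjoint (stdSimplex ℝ T) K := by
    rw [Set.disjoint_left]
    rintro _ ⟨hy0, hy1⟩ ⟨m, hm, rfl⟩
    have hzero := hA m (fun s => hm s (mem_univ s))
      (fun t => by simpa [Finset.sum_apply] using hy0 t)
    simp [Finset.sum_apply, hzero] at hy1
  obtain ⟨f, u, w, hfu, huw, hwf⟩ := geometric_hahn_banach_compact_closed
    (convex_stdSimplex ℝ T) (isCompact_stdSimplex ℝ T) (convex_nonnegCombinations _)
    (isClosed_nonnegCombinations _) hdisj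
  have hw : w < 0 := by simpa using hwf 0 ⟨0, by simp, by simp⟩
  have hfK : ∀ x ∈ K, 0 ≤ f x := by
    intro x hx
    by_contra! hneg
    have := hwf ((w / f x) • x)
      (smul_mem_nonnegCombinations hx (div_nonneg_of_nonpos hw.le hneg.le))
    rw [map_smul, smul_eq_mul, div_mul_cancel₀ _ hneg.ne] at this
    exact lt_irrefl _ this
  refine ⟨fun t => -f (fun t' => if t = t' then 1 else 0), fun t => ?_, fun s => ?_⟩
  · linarith [hfu _ (ite_eq_mem_stdSimplex ℝ t)]
  · have hAs : A s ∈ K :=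
      ⟨fun s' => if s = s' then 1 else 0, fun s' _ => by dsimp only; split_ifs <;> norm_num,
        by simp⟩
    have hf : ∑ t, -f (fun t' => if t = t' then 1 else 0) * A s t = -f (A s) := by
      have := f.toLinearMap.pi_apply_eq_sum_univ (A s)
      simp only [ContinuousLinearMap.coe_coe, smul_eq_mul] at this
      simp [this, mul_comm]
    rw [hf, neg_nonpos]
    exact hfK _ hAs

section WeakDominance

variable {S Ω : Type*} [Fintype S] (u : S → Ω → ℝ)

theorem exists_weaklyDominating_of_sum_mul_sub_nonneg {T : Set Ω} {σ : S} {m : S → ℝ}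
    (hm : ∀ s, 0 ≤ m s) (hle : ∀ τ ∈ T, 0 ≤ ∑ s, m s * (u s τ - u σ τ)) {τ₀ : Ω} (hτ₀ : τ₀ ∈ T)
    (hlt : 0 < ∑ s, m s * (u s τ₀ - u σ τ₀)) :
    ∃ m : S → ℝ, IsDist m ∧ (∀ τ ∈ T, u σ τ ≤ ∑ s, m s * u s τ) ∧
      ∃ τ ∈ T, u σ τ < ∑ s, m s * u s τ := by
  have hM : 0 < ∑ s, m s := by
    refine (sum_nonneg fun s _ => hm s).lt_of_ne' fun hM => ?_
    rw [sum_eq_zero_iff_of_nonneg fun s _ => hm s] at hM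
    simp [hM] at hlt
  have hgain : ∀ τ, ∑ s, m s / (∑ s, m s) * u s τ - u σ τ =
      (∑ s, m s * (u s τ - u σ τ)) / ∑ s, m s := by
    intro τ
    simp only [mul_sub, sum_sub_distrib, ← sum_mul, sub_div, sum_div, div_mul_eq_mul_div]
    rw [mul_div_cancel_left₀ _ hM.ne']
  refine ⟨fun s => m s / ∑ s, m s, ⟨fun s => div_nonneg (hm s) hM.le, ?_⟩, fun τ hτ => ?_,
    τ₀, hτ₀, ?_⟩
  · rw [← sum_div, div_self hM.ne']
  · linarith [hgain τ, div_nonneg (hle τ hτ) hM.le]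
  · linarith [hgain τ₀, div_pos hlt hM]

variable [Fintype Ω]

theorem exists_fullSupport_bestResponse_of_not_weaklyDominated {T : Set Ω} (hT : T.Nonempty)
    {σ : S}
    (h : ¬∃ m : S → ℝ, IsDist m ∧ (∀ τ ∈ T, u σ τ ≤ ∑ s, m s * u s τ) ∧
      ∃ τ ∈ T, u σ τ < ∑ s, m s * u s τ) :
    ∃ p : Ω → ℝ, IsDist p ∧ (∀ τ, 0 < p τ ↔ τ ∈ T) ∧
      ∀ s, ∑ τ, p τ * u s τ ≤ ∑ τ, p τ * u σ τ := by
  classical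
  have : Nonempty Ω := hT.to_subtype.map Subtype.val
  have hsum_indicator : ∀ (m : S → ℝ) τ, ∑ s, m s * T.indicator (fun τ => u s τ - u σ τ) τ =
      T.indicator (fun τ => ∑ s, m s * (u s τ - u σ τ)) τ := by
    intro m τ
    by_cases hτ : τ ∈ T <;> simp [hτ]
  -- the gains are set to zero outside `T`, so that only the values of `q` on `T` matter
  obtain ⟨q, hq, hqA⟩ := exists_pos_forall_sum_mul_nonpos
    (fun s => T.indicator fun τ => u s τ - u σ τ) fun m hm hmA τ₀ => by
      simp only [hsum_indicator] at hmA ⊢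
      by_contra hne
      have hτ₀ : τ₀ ∈ T := by_contra fun hτ₀ => hne (Set.indicator_of_notMem hτ₀ _)
      refine h (exists_weaklyDominating_of_sum_mul_sub_nonneg u hm (fun τ hτ => ?_) hτ₀ ?_)
      · simpa [Set.indicator_of_mem hτ] using hmA τ
      · simpa [Set.indicator_of_mem hτ₀] using (hmA τ₀).lt_of_ne' hne
  set Z := ∑ τ, T.indicator q τ
  have hq₀ : ∀ τ, 0 ≤ T.indicator q τ := Set.indicator_nonneg fun τ _ => (hq τ).le
  have hZ : 0 < Z := by
    obtain ⟨τ, hτ⟩ := hT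
    exact sum_pos' (fun τ _ => hq₀ τ) ⟨τ, mem_univ τ, by simpa [hτ] using hq τ⟩
  refine ⟨fun τ => T.indicator q τ / Z, ⟨fun τ => div_nonneg (hq₀ τ) hZ.le, ?_⟩, fun τ => ?_,
    fun s => ?_⟩
  · rw [← sum_div, div_self hZ.ne']
  · by_cases hτ : τ ∈ T <;> simp [hτ, hq τ, hZ]
  · have hsplit : ∀ τ, q τ * T.indicator (fun τ => u s τ - u σ τ) τ =
        T.indicator q τ * u s τ - T.indicator q τ * u σ τ := by
      intro τ
      by_cases hτ : τ ∈ T <;> simp [hτ, mul_sub]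
    have := hqA s
    rw [sum_congr rfl fun τ _ => hsplit τ, sum_sub_distrib, sub_nonpos] at this
    simp only [div_mul_eq_mul_div, ← sum_div]
    exact div_le_div_of_nonneg_right this hZ.le

theorem not_weaklyDominated_of_fullSupport_bestResponse {T : Set Ω} {σ : S} {p : Ω → ℝ}
    (hp : ∀ τ, 0 ≤ p τ) (hpT : ∀ τ, 0 < p τ ↔ τ ∈ T)
    (hbest : ∀ s, ∑ τ, p τ * u s τ ≤ ∑ τ, p τ * u σ τ) :
    ¬∃ m : S → ℝ, IsDist m ∧ (∀ τ ∈ T, u σ τ ≤ ∑ s, m s * u s τ) ∧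
      ∃ τ ∈ T, u σ τ < ∑ s, m s * u s τ := by
  rintro ⟨m, ⟨hm, hm1⟩, hle, τ₀, hτ₀, hlt⟩
  have hstrict : ∑ τ, p τ * u σ τ < ∑ τ, p τ * ∑ s, m s * u s τ := by
    refine sum_lt_sum (fun τ _ => ?_) ⟨τ₀, mem_univ τ₀, by gcongr; exact (hpT τ₀).2 hτ₀⟩
    rcases (hp τ).eq_or_lt with hτ | hτ
    · simp [← hτ]
    · exact mul_le_mul_of_nonneg_left (hle τ ((hpT τ).1 hτ)) (hp τ)
  have hmix : ∑ τ, p τ * ∑ s, m s * u s τ ≤ ∑ τ, p τ * u σ τ :=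
    calc ∑ τ, p τ * ∑ s, m s * u s τ = ∑ s, m s * ∑ τ, p τ * u s τ := by
          simp only [mul_sum]
          rw [sum_comm]
          exact sum_congr rfl fun s _ => sum_congr rfl fun τ _ => by ring
      _ ≤ ∑ s, m s * ∑ τ, p τ * u σ τ :=
          sum_le_sum fun s _ => mul_le_mul_of_nonneg_left (hbest s) (hm s)
      _ = ∑ τ, p τ * u σ τ := by rw [← sum_mul, hm1, one_mul]
  exact (hstrict.trans_le hmix).false

theorem not_weaklyDominated_iff_exists_fullSupport_bestResponse {T : Set Ω} (hT : T.Nonempty)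
    {σ : S} :
    (¬∃ m : S → ℝ, IsDist m ∧ (∀ τ ∈ T, u σ τ ≤ ∑ s, m s * u s τ) ∧
      ∃ τ ∈ T, u σ τ < ∑ s, m s * u s τ) ↔
    ∃ p : Ω → ℝ, IsDist p ∧ (∀ τ, 0 < p τ ↔ τ ∈ T) ∧
      ∀ s, ∑ τ, p τ * u s τ ≤ ∑ τ, p τ * u σ τ :=
  ⟨exists_fullSupport_bestResponse_of_not_weaklyDominated u hT, fun ⟨_, hp, hpT, hbest⟩ =>
    not_weaklyDominated_of_fullSupport_bestResponse u hp.1 hpT hbest⟩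

end WeakDominance

theorem probOf_pos {α : Type*} [Fintype α] {p : α → ℝ} (hp : ∀ a, 0 ≤ p a) {E : Set α} {a : α}
    (ha : a ∈ E) (hpa : 0 < p a) : 0 < probOf p E :=
  sum_pos' (fun b _ => Set.indicator_nonneg (fun b _ => hp b) b)
    ⟨a, mem_univ a, by rwa [Set.indicator_of_mem ha]⟩

namespace LPS

variable {Ω : Type*} [Fintype Ω] (L : LPS Ω) {E : Set Ω}

theorem condFirst_eq_of_pos (hE : 0 < probOf (L.μ 0) E) (V : Set Ω) :
    L.condFirst V E = probOf (L.μ 0) (V ∩ E) / probOf (L.μ 0) E := by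
  have hex : ∃ ℓ : ℕ, ∃ hℓ : ℓ < L.m + 1, 0 < probOf (L.μ ⟨ℓ, hℓ⟩) E := ⟨0, L.m.succ_pos, hE⟩
  have h0 : (⟨Nat.find hex, (Nat.find_spec hex).choose⟩ : Fin (L.m + 1)) = 0 :=
    Fin.ext ((Nat.find_eq_zero hex).2 ⟨_, hE⟩)
  rw [condFirst, dif_pos hex, h0]

theorem condExp_eq_of_pos (hE : 0 < probOf (L.μ 0) E) (f : Ω → ℝ) :
    L.condExp E f = (∑ a, E.indicator (L.μ 0) a * f a) / probOf (L.μ 0) E := by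
  classical
  simp only [condExp, L.condFirst_eq_of_pos hE, sum_div, div_mul_eq_mul_div]
  refine sum_congr rfl fun a _ => ?_
  congr 2
  simp [probOf, Set.indicator_apply, ite_and]

end LPS

section Experience

variable {Act Lab ι : Type*} [DecidableEq ι] (owner : List Act → ι) (label : List Act → Lab)
  (i : ι)

theorem experGo_append (pre r₁ r₂ : List Act) :
    experGo owner label i pre (r₁ ++ r₂) =
      experGo owner label i pre r₁ ++ experGo owner label i (pre ++ r₁) r₂ := by
  induction r₁ generalizing pre with
  | nil => simp [experGo]
  | cons a r₁ ih => simp [experGo, ih, List.append_assoc]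

variable {owner label i}

theorem exists_experGo_eq_append_cons {h₀ h : List Act} (hpre : h₀ <+: h) (hne : h₀ ≠ h)
    (how : owner h₀ = i) :
    ∃ a t, experGo owner label i [] h =
      experGo owner label i [] h₀ ++ (label h₀, a) :: experGo owner label i (h₀ ++ [a]) t := by
  obtain ⟨_ | ⟨a, t⟩, rfl⟩ := hpre
  · simp at hne
  · refine ⟨a, t, ?_⟩
    rw [experGo_append]
    simp [experGo, how]

theorem exists_isPrefix_of_mem_experGo {c : Lab} {a : Act} {pre rest : List Act}
    (hmem : (c, a) ∈ experGo owner label i pre rest) :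
    ∃ h₀, h₀ ++ [a] <+: pre ++ rest ∧ owner h₀ = i ∧ label h₀ = c := by
  induction rest generalizing pre with
  | nil => simp [experGo] at hmem
  | cons b rest ih =>
    simp only [experGo, List.mem_append] at hmem
    rcases hmem with hmem | hmem
    · split_ifs at hmem with how
      · obtain ⟨rfl, rfl⟩ := Prod.mk.inj (List.mem_singleton.1 hmem)
        exact ⟨pre, ⟨rest, by simp⟩, how, rfl⟩
      · simp at hmem
    · obtain ⟨h₀, hpre, how, hl⟩ := ih hmem
      exact ⟨h₀, by simpa using hpre, how, hl⟩

end Experience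

namespace ExtGame

variable {n : ℕ} {G : ExtGame n} {i : Fin n}

theorem mem_H_of_isPrefix {h h' : List G.Act} (hpre : h' <+: h) (hh : h ∈ G.H) : h' ∈ G.H := by
  obtain ⟨t, rfl⟩ := hpre
  induction t using List.reverseRecOn with
  | nil => simpa using hh
  | append_singleton t a ih =>
    exact ih (G.prefix_closed _ a (by simpa [List.append_assoc] using hh))

theorem experGo_eq_of_label_eq {h h' : List G.Act} (hd : G.DecOf i h) (hd' : G.DecOf i h')
    (hl : G.label h = G.label h') :
    experGo G.owner G.label i [] h = experGo G.owner G.label i [] h' := by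
  have := G.perfect_recall h h' hd.1.1 hd'.1.1 hd.1.2 hd'.1.2 hl
  rwa [hd.2] at this

open Classical in
/-- By perfect recall the value does not depend on the node of `c` chosen (`infoRank_eq`). -/
noncomputable def infoRank (G : ExtGame n) (i : Fin n) (c : G.Lab) : ℕ :=
  if h : G.IsInfo i c then (experGo G.owner G.label i [] h.choose).length else 0

theorem infoRank_eq {c : G.Lab} {h : List G.Act} (hd : G.DecOf i h) (hl : G.label h = c) :
    G.infoRank i c = (experGo G.owner G.label i [] h).length := by
  have hc : G.IsInfo i c := ⟨h, hd, hl⟩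
  rw [infoRank, dif_pos hc,
    experGo_eq_of_label_eq hc.choose_spec.1 hd (hc.choose_spec.2.trans hl.symm)]

theorem infoRank_lt_of_precedes {c' c : G.Lab} (hpr : G.Precedes i c' c) :
    G.infoRank i c' < G.infoRank i c := by
  obtain ⟨h, h', hd, hd', rfl, rfl, hpre, hne⟩ := hpr
  obtain ⟨a, t, he⟩ := exists_experGo_eq_append_cons (label := G.label) hpre hne hd.2
  rw [infoRank_eq hd rfl, infoRank_eq hd' rfl, he]
  simp

theorem infoRank_le_of_atOrBelow {c' c : G.Lab} (hab : G.AtOrBelow i c' c) :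
    G.infoRank i c ≤ G.infoRank i c' := by
  obtain ⟨h, h', hd, hd', rfl, rfl, hpre⟩ := hab
  rcases eq_or_ne h' h with rfl | hne
  · rfl
  · exact (infoRank_lt_of_precedes ⟨h', h, hd', hd, rfl, rfl, hpre, hne⟩).le

theorem not_precedes_of_atOrBelow {c' c : G.Lab} (hab : G.AtOrBelow i c' c) :
    ¬G.Precedes i c' c :=
  fun hpr => (infoRank_lt_of_precedes hpr).not_ge (infoRank_le_of_atOrBelow hab)

theorem atOrBelow_self {c : G.Lab} (hc : G.IsInfo i c) : G.AtOrBelow i c c := by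
  obtain ⟨h, hd, hl⟩ := hc
  exact ⟨h, h, hd, hd, hl, hl, List.prefix_refl h⟩

/-- By perfect recall, the experience of `i` at `q` records the visit to `c`. -/
theorem exists_isPrefix_of_atOrBelow {c : G.Lab} {q : List G.Act} (hq : G.DecOf i q)
    (hab : G.AtOrBelow i (G.label q) c) : ∃ h₀, h₀ <+: q ∧ G.DecOf i h₀ ∧ G.label h₀ = c := by
  obtain ⟨h, h', hd, hd', rfl, hl, hpre⟩ := hab
  rcases eq_or_ne h' h with rfl | hne
  · exact ⟨q, List.prefix_refl q, hq, hl.symm⟩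
  obtain ⟨a, t, he⟩ := exists_experGo_eq_append_cons (label := G.label) hpre hne hd'.2
  have hmem : (G.label h', a) ∈ experGo G.owner G.label i [] q := by
    rw [← experGo_eq_of_label_eq hd hq hl, he]
    simp
  obtain ⟨h₀, hpre_a, how, hl₀⟩ := exists_isPrefix_of_mem_experGo hmem
  rw [List.nil_append] at hpre_a
  have hpre₀ : h₀ <+: q := (List.prefix_append h₀ [a]).trans hpre_a
  exact ⟨h₀, hpre₀,
    ⟨⟨mem_H_of_isPrefix hpre₀ hq.1.1, a, mem_H_of_isPrefix hpre_a hq.1.1⟩, how⟩, hl₀⟩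

theorem isPrefix_playFrom (sp : (j : Fin n) → G.PStrat j) (f : ℕ) (h : List G.Act) :
    h <+: G.playFrom sp f h := by
  induction f generalizing h with
  | zero => exact List.prefix_refl h
  | succ f ih =>
    rw [playFrom]
    split_ifs
    exacts [(List.prefix_append h _).trans (ih _), List.prefix_refl h]

theorem exists_divergence_playFrom (sp sp' : (j : Fin n) → G.PStrat j) (f : ℕ)
    (h : List G.Act) (hne : G.playFrom sp f h ≠ G.playFrom sp' f h) :
    ∃ q, G.Dec q ∧ q ++ [(sp (G.owner q)).val (G.label q)] <+: G.playFrom sp f h ∧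
      q ++ [(sp' (G.owner q)).val (G.label q)] <+: G.playFrom sp' f h ∧
      (sp (G.owner q)).val (G.label q) ≠ (sp' (G.owner q)).val (G.label q) := by
  induction f generalizing h with
  | zero => exact absurd rfl hne
  | succ f ih =>
    by_cases hd : G.Dec h
    · simp only [playFrom, if_pos hd] at hne ⊢
      by_cases ha : (sp (G.owner h)).val (G.label h) = (sp' (G.owner h)).val (G.label h)
      · rw [ha] at hne ⊢
        exact ih _ hne
      · exact ⟨h, hd, isPrefix_playFrom _ _ _, isPrefix_playFrom _ _ _, ha⟩
    · simp [playFrom, if_neg hd] at hne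

theorem combine_self (s : G.PStrat i) (τ : G.OppProf i) : G.combine i s τ i = s := by
  simp [combine]

theorem combine_of_ne (s : G.PStrat i) (τ : G.OppProf i) {j : Fin n} (hj : j ≠ i) :
    G.combine i s τ j = τ ⟨j, hj⟩ := by
  simp [combine, hj]

theorem exists_divergence_outcome {s s' : G.PStrat i} {τ : G.OppProf i}
    (hne : G.outcome (G.combine i s τ) ≠ G.outcome (G.combine i s' τ)) :
    ∃ q, G.DecOf i q ∧ q ++ [s.val (G.label q)] <+: G.outcome (G.combine i s τ) ∧
      q ++ [s'.val (G.label q)] <+: G.outcome (G.combine i s' τ) ∧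
      s.val (G.label q) ≠ s'.val (G.label q) := by
  obtain ⟨q, hq, hqs, hqs', hact⟩ := G.exists_divergence_playFrom _ _ _ _ hne
  have how : G.owner q = i := by
    by_contra how
    simp only [combine_of_ne _ _ how] at hact
    exact hact rfl
  rw [how] at hqs hqs' hact
  rw [combine_self] at hqs hqs' hact
  rw [combine_self] at hact
  exact ⟨q, ⟨hq, how⟩, hqs, hqs', hact⟩

theorem outcome_eq_of_agree_below {s s' : G.PStrat i} {τ : G.OppProf i} {h₀ : List G.Act}
    (hs : h₀ <+: G.outcome (G.combine i s τ)) (hs' : h₀ <+: G.outcome (G.combine i s' τ))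
    (hagree : ∀ q, G.DecOf i q → h₀ <+: q →
      q ++ [s.val (G.label q)] <+: G.outcome (G.combine i s τ) →
      s'.val (G.label q) = s.val (G.label q)) :
    G.outcome (G.combine i s' τ) = G.outcome (G.combine i s τ) := by
  by_contra hne
  obtain ⟨q, hq, hqs, hqs', hact⟩ := exists_divergence_outcome (Ne.symm hne)
  rcases List.prefix_or_prefix_of_prefix hs ((List.prefix_append q _).trans hqs) with hle | hle
  · exact hact (hagree q hq hle hqs).symm
  rcases eq_or_ne q h₀ with rfl | hlt
  · exact hact (hagree q hq (List.prefix_refl q) hqs).symm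
  -- the plays diverge strictly above `h₀`, which both of them pass through: impossible
  have hlen : (q ++ [s.val (G.label q)]).length ≤ h₀.length := by
    simpa using (hle.length_le.lt_of_ne fun h => hlt (hle.eq_of_length h))
  have hq' : q ++ [s.val (G.label q)] <+: G.outcome (G.combine i s' τ) :=
    (List.prefix_of_prefix_length_le hqs hs hlen).trans hs'
  have heq : q ++ [s.val (G.label q)] = q ++ [s'.val (G.label q)] := by
    rcases List.prefix_or_prefix_of_prefix hq' hqs' with h | h
    exacts [h.eq_of_length (by simp), (h.eq_of_length (by simp)).symm]
  exact hact (by simpa using heq)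

def AgreesBefore (G : ExtGame n) (i : Fin n) (c : G.Lab) (σ σ' : G.PStrat i) : Prop :=
  ∀ c', G.IsInfo i c' → G.Precedes i c' c → σ'.val c' = σ.val c'

theorem AgreesBefore.symm {c : G.Lab} {s s' : G.PStrat i} (h : G.AgreesBefore i c s s') :
    G.AgreesBefore i c s' s :=
  fun c' hc' hpr => (h c' hc' hpr).symm

theorem AgreesBefore.trans {c : G.Lab} {s s' s'' : G.PStrat i} (h : G.AgreesBefore i c s s')
    (h' : G.AgreesBefore i c s' s'') : G.AgreesBefore i c s s'' :=
  fun c' hc' hpr => (h' c' hc' hpr).trans (h c' hc' hpr)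

theorem isPrefix_outcome_of_agreesBefore {c : G.Lab} {s s' : G.PStrat i}
    (hagree : G.AgreesBefore i c s s') {τ : G.OppProf i} {h₀ : List G.Act}
    (hh₀ : h₀ <+: G.outcome (G.combine i s τ)) (hd₀ : G.DecOf i h₀) (hl₀ : G.label h₀ = c) :
    h₀ <+: G.outcome (G.combine i s' τ) := by
  by_cases heq : G.outcome (G.combine i s' τ) = G.outcome (G.combine i s τ)
  · exact heq ▸ hh₀
  obtain ⟨q, hq, hqs, hqs', hact⟩ := exists_divergence_outcome (Ne.symm heq)
  rcases List.prefix_or_prefix_of_prefix hh₀ ((List.prefix_append q _).trans hqs) with hle | hle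
  · exact hle.trans ((List.prefix_append q _).trans hqs')
  rcases eq_or_ne q h₀ with rfl | hne
  · exact (List.prefix_append q _).trans hqs'
  · exact absurd (hagree _ ⟨q, hq, rfl⟩ ⟨q, h₀, hq, hd₀, rfl, hl₀, hle, hne⟩).symm hact

theorem reaches_of_agreesBefore {c : G.Lab} {s s' : G.PStrat i}
    (hagree : G.AgreesBefore i c s s') {τ : G.OppProf i}
    (h : G.Reaches (G.combine i s τ) i c) : G.Reaches (G.combine i s' τ) i c := by
  obtain ⟨h₀, hh₀, hd₀, hl₀⟩ := h
  exact ⟨h₀, isPrefix_outcome_of_agreesBefore hagree hh₀ hd₀ hl₀, hd₀, hl₀⟩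

theorem outcome_eq_of_not_reaches {c : G.Lab} {s s' : G.PStrat i} {τ : G.OppProf i}
    (hagree : ∀ c', G.IsInfo i c' → ¬G.AtOrBelow i c' c → s'.val c' = s.val c')
    (hnr : ¬G.Reaches (G.combine i s τ) i c) :
    G.outcome (G.combine i s' τ) = G.outcome (G.combine i s τ) :=
  outcome_eq_of_agree_below List.nil_prefix List.nil_prefix fun q hq _ hqs => by
    refine hagree _ ⟨q, hq, rfl⟩ fun hab => hnr ?_
    obtain ⟨h₀, hpre, hd₀, hl₀⟩ := exists_isPrefix_of_atOrBelow hq hab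
    exact ⟨h₀, hpre.trans ((List.prefix_append q _).trans hqs), hd₀, hl₀⟩

open Classical in
noncomputable def patch (G : ExtGame n) (i : Fin n) (c : G.Lab) (out rep : G.PStrat i) :
    G.PStrat i :=
  ⟨fun c' => if G.AtOrBelow i c' c then rep.val c' else out.val c', fun h hd => by
    dsimp only
    split_ifs
    exacts [rep.property h hd, out.property h hd]⟩

theorem patch_val_of_atOrBelow {c c' : G.Lab} {out rep : G.PStrat i}
    (h : G.AtOrBelow i c' c) : (G.patch i c out rep).val c' = rep.val c' :=
  if_pos h

theorem patch_val_of_not_atOrBelow {c c' : G.Lab} {out rep : G.PStrat i}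
    (h : ¬G.AtOrBelow i c' c) : (G.patch i c out rep).val c' = out.val c' :=
  if_neg h

theorem agreesBefore_patch (c : G.Lab) (out rep : G.PStrat i) :
    G.AgreesBefore i c out (G.patch i c out rep) :=
  fun _ _ hpr => patch_val_of_not_atOrBelow fun hab => not_precedes_of_atOrBelow hab hpr

theorem outcome_patch_of_not_reaches {c : G.Lab} {out rep : G.PStrat i} {τ : G.OppProf i}
    (hnr : ¬G.Reaches (G.combine i out τ) i c) :
    G.outcome (G.combine i (G.patch i c out rep) τ) = G.outcome (G.combine i out τ) :=
  outcome_eq_of_not_reaches (fun _ _ hab => patch_val_of_not_atOrBelow hab) hnr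

theorem outcome_patch_of_reaches {c : G.Lab} {out rep : G.PStrat i} {τ : G.OppProf i}
    (hagree : G.AgreesBefore i c rep out) (hr : G.Reaches (G.combine i rep τ) i c) :
    G.outcome (G.combine i (G.patch i c out rep) τ) = G.outcome (G.combine i rep τ) := by
  obtain ⟨h₀, hh₀, hd₀, hl₀⟩ := hr
  exact outcome_eq_of_agree_below hh₀
    (isPrefix_outcome_of_agreesBefore (hagree.trans (agreesBefore_patch c out rep)) hh₀ hd₀ hl₀)
    fun q hq hpre _ => patch_val_of_atOrBelow ⟨q, h₀, hq, hd₀, hl₀, rfl, hpre⟩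

open Classical in
noncomputable def diffInfoSets (G : ExtGame n) (i : Fin n) (σ σ' : G.PStrat i) :
    Finset G.Lab :=
  univ.filter fun c => G.IsInfo i c ∧ σ'.val c ≠ σ.val c

theorem mem_diffInfoSets {σ σ' : G.PStrat i} {c : G.Lab} :
    c ∈ G.diffInfoSets i σ σ' ↔ G.IsInfo i c ∧ σ'.val c ≠ σ.val c := by
  simp [diffInfoSets]

theorem outcome_eq_of_diffInfoSets_eq_empty {σ σ' : G.PStrat i}
    (h : G.diffInfoSets i σ σ' = ∅) (τ : G.OppProf i) :
    G.outcome (G.combine i σ' τ) = G.outcome (G.combine i σ τ) :=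
  outcome_eq_of_agree_below List.nil_prefix List.nil_prefix fun q hq _ _ => by
    by_contra hne
    simpa [h] using mem_diffInfoSets.2 ⟨⟨q, hq, rfl⟩, hne⟩

theorem exists_agreesBefore_mem_diffInfoSets {σ σ' : G.PStrat i}
    (h : (G.diffInfoSets i σ σ').Nonempty) :
    ∃ c ∈ G.diffInfoSets i σ σ', G.AgreesBefore i c σ σ' := by
  obtain ⟨c, hc, hmin⟩ := (G.diffInfoSets i σ σ').exists_min_image (G.infoRank i) h
  refine ⟨c, hc, fun c' hc' hpr => ?_⟩
  by_contra hne
  exact (infoRank_lt_of_precedes hpr).not_ge (hmin c' (mem_diffInfoSets.2 ⟨hc', hne⟩))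

theorem diffInfoSets_patch_ssubset {σ σ' : G.PStrat i} {c : G.Lab}
    (hc : c ∈ G.diffInfoSets i σ σ') :
    G.diffInfoSets i σ (G.patch i c σ' σ) ⊂ G.diffInfoSets i σ σ' := by
  refine Finset.ssubset_of_subset_of_ssubset (fun c' hc' => ?_) (erase_ssubset hc)
  obtain ⟨hinfo, hne⟩ := mem_diffInfoSets.1 hc'
  by_cases hab : G.AtOrBelow i c' c
  · exact absurd (patch_val_of_atOrBelow hab) hne
  · rw [patch_val_of_not_atOrBelow hab] at hne
    exact mem_erase.2 ⟨fun h => hab (h ▸ atOrBelow_self hinfo), mem_diffInfoSets.2 ⟨hinfo, hne⟩⟩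

noncomputable def expectedU (G : ExtGame n) (i : Fin n) (p : G.OppProf i → ℝ)
    (s : G.PStrat i) : ℝ :=
  ∑ τ, p τ * G.U i (G.combine i s τ)

def IsBestResponse (G : ExtGame n) (i : Fin n) (p : G.OppProf i → ℝ) (σ : G.PStrat i) : Prop :=
  ∀ s, G.expectedU i p s ≤ G.expectedU i p σ

theorem expectedU_congr {p : G.OppProf i → ℝ} {s t : G.PStrat i}
    (h : ∀ τ, p τ ≠ 0 → G.outcome (G.combine i s τ) = G.outcome (G.combine i t τ)) :
    G.expectedU i p s = G.expectedU i p t :=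
  sum_congr rfl fun τ _ => by
    rcases eq_or_ne (p τ) 0 with hp | hp
    · simp [hp]
    · rw [U, U, h τ hp]

theorem expectedU_indicator_add_compl (E : Set (G.OppProf i)) (p : G.OppProf i → ℝ)
    (s : G.PStrat i) :
    G.expectedU i (E.indicator p) s + G.expectedU i (Eᶜ.indicator p) s = G.expectedU i p s := by
  simp only [expectedU, ← sum_add_distrib, ← add_mul, Set.indicator_self_add_compl_apply]

/-- Splice `σ'` into `σ` at and below `c`: the result plays like `σ'` wherever `σ` reaches `c` and
like `σ` elsewhere. -/
theorem IsBestResponse.expectedU_reachSet_le {T : Set (G.OppProf i)} {p : G.OppProf i → ℝ}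
    {σ : G.PStrat i} (hσ : G.IsBestResponse i p σ) (hpT : ∀ τ, p τ ≠ 0 → τ ∈ T) (c : G.Lab)
    {σ' : G.PStrat i} (hagree : G.AgreesBefore i c σ σ') :
    G.expectedU i ((G.ReachSet i σ c T).indicator p) σ' ≤
      G.expectedU i ((G.ReachSet i σ c T).indicator p) σ := by
  set E := G.ReachSet i σ c T
  have hE : G.expectedU i (E.indicator p) (G.patch i c σ σ') =
      G.expectedU i (E.indicator p) σ' :=
    expectedU_congr fun τ hτ => outcome_patch_of_reaches hagree.symm
      (reaches_of_agreesBefore hagree (Set.mem_of_indicator_ne_zero hτ).2)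
  have hEc : G.expectedU i (Eᶜ.indicator p) (G.patch i c σ σ') =
      G.expectedU i (Eᶜ.indicator p) σ :=
    expectedU_congr fun τ hτ => outcome_patch_of_not_reaches fun hr => by
      obtain ⟨hτE, hpτ⟩ := Set.indicator_apply_ne_zero.1 hτ
      exact hτE ⟨hpT τ hpτ, hr⟩
  have := hσ (G.patch i c σ σ')
  rw [← expectedU_indicator_add_compl E, ← expectedU_indicator_add_compl E p σ, hE, hEc] at this
  linarith

/-- Undo the deviations of `σ'` from `σ` one information set at a time, earliest first: replacing
`σ'` by `σ` at and below such an information set `c` does not lower the payoff, by the hypothesis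
at `c`. -/
theorem isBestResponse_of_forall_reachSet {T : Set (G.OppProf i)} {p : G.OppProf i → ℝ}
    {σ : G.PStrat i} (hpT : ∀ τ, p τ ≠ 0 → τ ∈ T)
    (hcond : ∀ c, G.IsInfo i c → ∀ σ', G.AgreesBefore i c σ σ' →
      G.expectedU i ((G.ReachSet i σ c T).indicator p) σ' ≤
        G.expectedU i ((G.ReachSet i σ c T).indicator p) σ) :
    G.IsBestResponse i p σ := by
  intro σ'
  induction hk : (G.diffInfoSets i σ σ').card using Nat.strong_induction_on generalizing σ' with
  | _ k ih =>
  rcases (G.diffInfoSets i σ σ').eq_empty_or_nonempty with hD | hD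
  · exact (expectedU_congr fun τ _ => outcome_eq_of_diffInfoSets_eq_empty hD τ).le
  obtain ⟨c, hc, hagree⟩ := exists_agreesBefore_mem_diffInfoSets hD
  set E := G.ReachSet i σ c T
  set σ₁ := G.patch i c σ' σ
  have hE : G.expectedU i (E.indicator p) σ₁ = G.expectedU i (E.indicator p) σ :=
    expectedU_congr fun τ hτ => outcome_patch_of_reaches hagree (Set.mem_of_indicator_ne_zero hτ).2
  have hEc : G.expectedU i (Eᶜ.indicator p) σ₁ = G.expectedU i (Eᶜ.indicator p) σ' :=
    expectedU_congr fun τ hτ => outcome_patch_of_not_reaches fun hr => by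
      obtain ⟨hτE, hpτ⟩ := Set.indicator_apply_ne_zero.1 hτ
      exact hτE ⟨hpT τ hpτ, reaches_of_agreesBefore hagree.symm hr⟩
  calc G.expectedU i p σ'
      = G.expectedU i (E.indicator p) σ' + G.expectedU i (Eᶜ.indicator p) σ' :=
        (expectedU_indicator_add_compl E p σ').symm
    _ ≤ G.expectedU i (E.indicator p) σ₁ + G.expectedU i (Eᶜ.indicator p) σ₁ := by
        rw [hE, hEc]
        exact add_le_add_left (hcond c (mem_diffInfoSets.1 hc).1 σ' hagree) _
    _ = G.expectedU i p σ₁ := expectedU_indicator_add_compl E p σ₁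
    _ ≤ G.expectedU i p σ := ih _ (hk ▸ card_lt_card (diffInfoSets_patch_ssubset hc)) σ₁ rfl

theorem almostBestAt_iff {σ : G.PStrat i} {c : G.Lab} {L : LPS (G.OppProf i)}
    {E : Set (G.OppProf i)} (hE : 0 < probOf (L.μ 0) E) :
    G.AlmostBestAt i σ c L E ↔ ∀ σ', G.AgreesBefore i c σ σ' →
      G.expectedU i (E.indicator (L.μ 0)) σ' ≤ G.expectedU i (E.indicator (L.μ 0)) σ := by
  simp only [AlmostBestAt, LPS.condExp_eq_of_pos L hE, div_le_div_iff_of_pos_right hE]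
  rfl

end ExtGame

theorem not_weakly_dominated_iff_first_level_full_support_LPS_general {n : ℕ} (G : ExtGame n)
    (i : Fin n) (T : Set (G.OppProf i)) (hT : T.Nonempty)
    (σ : G.PStrat i) :
    (¬∃ m : G.PStrat i → ℝ, IsDist m ∧ G.WDomE i m σ T) ↔
      ∃ L : LPS (G.OppProf i),
        (∀ (ℓ : Fin (L.m + 1)) (τ : G.OppProf i), 0 < L.μ ℓ τ → τ ∈ T) ∧
        (∀ τ : G.OppProf i, 0 < L.μ 0 τ ↔ τ ∈ T) ∧
        ∀ c, G.IsInfo i c →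
          G.ReachSet i σ c T = ∅ ∨
          G.AlmostBestAt i σ c L (G.ReachSet i σ c T) := by
  refine (not_weaklyDominated_iff_exists_fullSupport_bestResponse
    (fun s τ => G.U i (G.combine i s τ)) hT).trans ⟨?_, ?_⟩
  · rintro ⟨p, hp, hpT, hbest⟩
    refine ⟨⟨0, fun _ => p, fun _ => hp⟩, fun _ τ => (hpT τ).1, hpT, fun c _ => ?_⟩
    refine (G.ReachSet i σ c T).eq_empty_or_nonempty.imp id fun ⟨τ, hτ⟩ => ?_
    exact (ExtGame.almostBestAt_iff (probOf_pos hp.1 hτ ((hpT τ).2 hτ.1))).2 fun σ' hagree =>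
      ExtGame.IsBestResponse.expectedU_reachSet_le hbest
        (fun τ hτ => (hpT τ).1 ((hp.1 τ).lt_of_ne' hτ)) c hagree
  · rintro ⟨L, -, hpT, hcond⟩
    refine ⟨L.μ 0, L.dist 0, hpT, ExtGame.isBestResponse_of_forall_reachSet
      (fun τ hτ => (hpT τ).1 (((L.dist 0).1 τ).lt_of_ne' hτ)) fun c hc σ' hagree => ?_⟩
    rcases (G.ReachSet i σ c T).eq_empty_or_nonempty with hE | ⟨τ, hτ⟩
    · simp [hE, ExtGame.expectedU]
    · exact (ExtGame.almostBestAt_iff (probOf_pos (L.dist 0).1 hτ ((hpT τ).2 hτ.1))).1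
        ((hcond c hc).resolve_left (Set.nonempty_iff_ne_empty.1 ⟨τ, hτ⟩)) σ' hagree

/-- `σ` is not weakly dominated on `Σ'` iff there is an LPS on `Σ'_{-i}`
whose first measure has support all of `Σ'_{-i}` such that, conditional on reaching each
reachable information set `I` of `i`, `σ` is an almost-best response to the conditional
LPS. -/
theorem not_weakly_dominated_iff_first_level_full_support_LPS {n : ℕ} (G : ExtGame n)
    (i : Fin n) (Ti : Set (G.PStrat i)) (T : Set (G.OppProf i)) (hT : T.Nonempty)
    (σ : G.PStrat i) (hσ : σ ∈ Ti) :
    (¬∃ m : G.PStrat i → ℝ, IsDist m ∧ G.WDomE i m σ T) ↔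
      ∃ L : LPS (G.OppProf i),
        (∀ (ℓ : Fin (L.m + 1)) (τ : G.OppProf i), 0 < L.μ ℓ τ → τ ∈ T) ∧
        (∀ τ : G.OppProf i, 0 < L.μ 0 τ ↔ τ ∈ T) ∧
        ∀ c, G.IsInfo i c →
          G.ReachSet i σ c T = ∅ ∨
          G.AlmostBestAt i σ c L (G.ReachSet i σ c T) :=
  not_weakly_dominated_iff_first_level_full_support_LPS_general G i T hT σ
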